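/- Let U ⊆ ℝ² be open and φ : U → ℝ³ a smooth immersion with induced metric g and second fundamental form h. Then the Codazzi equations hold: ∇_i h_{jk} − ∇_j h_{ik} = 0 on U for all i, j, k ∈ {1,2}, where ∇ is the covariant derivative of the induced metric g; equivalently, ∇h is a totally symmetric 3-tensor. -/

import Mathlib

noncomputable section
open Matrix Real

/-- Points of the parameter domain `U ⊆ ℝ²`. -/
abbrev Pt : Type := Fin 2 → ℝ
/-- Vectors in `ℝ³`. -/
abbrev Vec3 : Type := Fin 3 → ℝ

/-- Partial derivative `∂ᵢ` of a scalar function on `ℝ²`. -/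
def pd (i : Fin 2) (f : Pt → ℝ) : Pt → ℝ :=
  fun p => fderiv ℝ f p (Pi.single i 1)

/-- Partial derivative `∂ᵢ` of an `ℝ³`-valued function on `ℝ²`. -/
def pdV (i : Fin 2) (f : Pt → Vec3) : Pt → Vec3 :=
  fun p => fderiv ℝ f p (Pi.single i 1)

/-- The induced metric (first fundamental form) `gᵢⱼ = ∂ᵢφ ⬝ ∂ⱼφ` of a map `φ : ℝ² → ℝ³`. -/
def indMetric (φ : Pt → Vec3) : Pt → Matrix (Fin 2) (Fin 2) ℝ :=
  fun p => Matrix.of fun i j => pdV i φ p ⬝ᵥ pdV j φ p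

/-- The unit normal `n = (∂₁φ × ∂₂φ)/‖∂₁φ × ∂₂φ‖`. -/
def unitNormal (φ : Pt → Vec3) : Pt → Vec3 :=
  fun p => (Real.sqrt ((crossProduct (pdV 0 φ p) (pdV 1 φ p)) ⬝ᵥ
      (crossProduct (pdV 0 φ p) (pdV 1 φ p))))⁻¹ •
    crossProduct (pdV 0 φ p) (pdV 1 φ p)

/-- The second fundamental form `hᵢⱼ = n ⬝ ∂ᵢ∂ⱼφ`. -/
def sff (φ : Pt → Vec3) : Pt → Matrix (Fin 2) (Fin 2) ℝ :=
  fun p => Matrix.of fun i j => unitNormal φ p ⬝ᵥ pdV i (pdV j φ) p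

/-- Christoffel symbols `Γ^k_{ij}` of a metric `g`. -/
def christoffel (g : Pt → Matrix (Fin 2) (Fin 2) ℝ) (k i j : Fin 2) : Pt → ℝ :=
  fun p => (1/2) * ∑ l, (g p)⁻¹ k l *
    (pd i (fun q => g q j l) p + pd j (fun q => g q i l) p - pd l (fun q => g q i j) p)

/-- Covariant derivative `∇ᵢ h_{jk}` of a symmetric 2-tensor `h` with respect to `g`. -/
def covD (g h : Pt → Matrix (Fin 2) (Fin 2) ℝ) (i j k : Fin 2) : Pt → ℝ :=
  fun p => pd i (fun q => h q j k) p
    - ∑ l, christoffel g l i j p * h p l k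
    - ∑ l, christoffel g l i k p * h p j l

/-- Covariant Hessian `(∇²u)ᵢⱼ = ∂ᵢ∂ⱼu − Σₖ Γ^k_{ij} ∂ₖu`. -/
def hess (g : Pt → Matrix (Fin 2) (Fin 2) ℝ) (u : Pt → ℝ) (i j : Fin 2) : Pt → ℝ :=
  fun p => pd i (pd j u) p - ∑ k, christoffel g k i j p * pd k u p

/-- The curvature component `R₁₂₁₂` of a metric `g` (indices `1,2` rendered as `0,1`). -/
def R1212 (g : Pt → Matrix (Fin 2) (Fin 2) ℝ) : Pt → ℝ :=
  fun p => ∑ m, g p 0 m *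
    (pd 0 (christoffel g m 1 1) p - pd 1 (christoffel g m 1 0) p +
      ∑ l, (christoffel g m 0 l p * christoffel g l 1 1 p -
            christoffel g m 1 l p * christoffel g l 1 0 p))

/-- The Gauss curvature `K = R₁₂₁₂ / det g` of a metric `g`. -/
def gaussK (g : Pt → Matrix (Fin 2) (Fin 2) ℝ) : Pt → ℝ :=
  fun p => R1212 g p / (g p).det

/-- The squared norm `|du|²_g = Σᵢⱼ g^{ij} ∂ᵢu ∂ⱼu`. -/
def gradSq (g : Pt → Matrix (Fin 2) (Fin 2) ℝ) (u : Pt → ℝ) : Pt → ℝ :=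
  fun p => ∑ i, ∑ j, (g p)⁻¹ i j * pd i u p * pd j u p

/-- `g` is a smooth Riemannian metric on `U`: smooth entries, symmetric and
positive definite at each point of `U`. -/
def IsMetricOn (g : Pt → Matrix (Fin 2) (Fin 2) ℝ) (U : Set Pt) : Prop :=
  (∀ i j, ContDiffOn ℝ (⊤ : ℕ∞) (fun p => g p i j) U) ∧
  (∀ p ∈ U, (g p).IsSymm ∧ (g p).PosDef)

/-- `φ` is a smooth immersion on `U`. -/
def IsImmersionOn (φ : Pt → Vec3) (U : Set Pt) : Prop :=
  ContDiffOn ℝ (⊤ : ℕ∞) φ U ∧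
  ∀ p ∈ U, LinearIndependent ℝ ![pdV 0 φ p, pdV 1 φ p]


/-!
Differentiating `n ⬝ ∂_mφ = 0` and `n ⬝ n = 1` gives the Weingarten relations
`∂_i n ⬝ ∂_mφ = -h_im` and `∂_i n ⬝ n = 0`. Together with the Gauss formula
`∂_j∂_kφ = Γ^m_jk ∂_mφ + h_jk n`, differentiating `h_jk = n ⬝ ∂_j∂_kφ` then yields
`∂_i h_jk = n ⬝ ∂_i∂_j∂_kφ - Γ^m_jk h_im`. In `∇_i h_jk - ∇_j h_ik` the third derivatives cancel
by symmetry of mixed partials, and the Christoffel terms cancel because `Γ^l_ij = Γ^l_ji`.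
-/

open scoped Topology

section Calculus

variable {f : Pt → Vec3} {q : Pt}

lemma pdV_apply (hf : DifferentiableAt ℝ f q) (i : Fin 2) (a : Fin 3) :
    pdV i f q a = pd i (fun x => f x a) q := by
  simp [pd, pdV, fderiv_apply hf]

lemma Filter.EventuallyEq.pd_eq {u v : Pt → ℝ} (h : u =ᶠ[𝓝 q] v) (i : Fin 2) :
    pd i u q = pd i v q := by
  simp only [pd, h.fderiv_eq]

lemma pd_dotProduct {F G : Pt → Vec3} (hF : DifferentiableAt ℝ F q)
    (hG : DifferentiableAt ℝ G q) (i : Fin 2) :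
    pd i (fun x => F x ⬝ᵥ G x) q = pdV i F q ⬝ᵥ G q + F q ⬝ᵥ pdV i G q := by
  have hFa (a : Fin 3) : DifferentiableAt ℝ (fun x => F x a) q := differentiableAt_pi.1 hF a
  have hGa (a : Fin 3) : DifferentiableAt ℝ (fun x => G x a) q := differentiableAt_pi.1 hG a
  simp only [dotProduct, pdV_apply hF, pdV_apply hG, ← Finset.sum_add_distrib, pd]
  rw [fderiv_fun_sum (u := Finset.univ) (A := fun a x => F x a * G x a)
    fun a _ => (hFa a).mul (hGa a)]
  simp only [_root_.sum_apply, fderiv_fun_mul (hFa _) (hGa _),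
    _root_.add_apply, _root_.smul_apply, smul_eq_mul]
  exact Finset.sum_congr rfl fun _ _ => by ring

lemma contDiffAt_pdV {n : WithTop ℕ∞} (hf : ContDiffAt ℝ (n + 1) f q) (i : Fin 2) :
    ContDiffAt ℝ n (pdV i f) q :=
  (hf.fderiv_right le_rfl).clm_apply contDiffAt_const

lemma differentiableAt_pdV (hf : ContDiffAt ℝ 2 f q) (i : Fin 2) :
    DifferentiableAt ℝ (pdV i f) q :=
  (contDiffAt_pdV (n := 1) hf i).differentiableAt one_ne_zero

lemma pdV_pdV_comm (hf : ContDiffAt ℝ 2 f q) (i j : Fin 2) :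
    pdV i (pdV j f) q = pdV j (pdV i f) q := by
  have hd : DifferentiableAt ℝ (fderiv ℝ f) q :=
    (hf.fderiv_right (m := 1) (by norm_num)).differentiableAt one_ne_zero
  have hsnd (v w : Pt) : fderiv ℝ (fun x => fderiv ℝ f x w) q v = fderiv ℝ (fderiv ℝ f) q v w := by
    simp [fderiv_clm_apply hd (differentiableAt_const w)]
  unfold pdV
  rw [hsnd, hsnd]
  exact hf.isSymmSndFDerivAt (by simp) _ _

end Calculus

section VectorAlgebra

lemma dotProduct_self_pos {ι : Type*} [Fintype ι] {v : ι → ℝ} (hv : v ≠ 0) : 0 < v ⬝ᵥ v := by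
  simpa using dotProduct_self_star_pos_iff.2 hv

lemma contDiff_crossProduct {n : WithTop ℕ∞} :
    ContDiff ℝ n (fun v : Vec3 × Vec3 => v.1 ⨯₃ v.2) := by
  refine contDiff_pi.2 fun a => ?_
  fin_cases a <;> simp only [cross_apply, Fin.zero_eta, Fin.mk_one, Fin.reduceFinMk, cons_val] <;>
    fun_prop

lemma contDiff_dotProduct {ι : Type*} [Fintype ι] {n : WithTop ℕ∞} :
    ContDiff ℝ n (fun v : (ι → ℝ) × (ι → ℝ) => v.1 ⬝ᵥ v.2) := by
  simp only [dotProduct]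
  fun_prop

lemma eq_zero_of_dotProduct_eq_zero_of_cross_ne_zero {a b v : Vec3} (hab : a ⨯₃ b ≠ 0)
    (ha : v ⬝ᵥ a = 0) (hb : v ⬝ᵥ b = 0) (hn : v ⬝ᵥ a ⨯₃ b = 0) : v = 0 := by
  -- `v ⊥ a, b` makes `v` parallel to `a ⨯₃ b`, and Lagrange's identity then forces `v = 0`.
  have hcross : v ⨯₃ (a ⨯₃ b) = 0 := by
    rw [cross_cross_eq_smul_sub_smul', hb, dotProduct_comm, ha, zero_smul, zero_smul, sub_zero]
  have hlagrange := cross_dot_cross v (a ⨯₃ b) v (a ⨯₃ b)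
  rw [hcross, zero_dotProduct, hn, zero_mul, sub_zero] at hlagrange
  have hab' : a ⨯₃ b ⬝ᵥ a ⨯₃ b ≠ 0 := by rwa [Ne, dotProduct_self_eq_zero]
  exact dotProduct_self_eq_zero.1 ((mul_eq_zero.1 hlagrange.symm).resolve_right hab')

end VectorAlgebra

section Christoffel

variable {g : Pt → Matrix (Fin 2) (Fin 2) ℝ}

lemma christoffel_comm (hg : ∀ x, (g x).IsSymm) (k i j : Fin 2) :
    christoffel g k i j = christoffel g k j i := by
  have hsymm (a b : Fin 2) : (fun x => g x a b) = fun x => g x b a :=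
    funext fun x => (hg x).apply b a
  ext x
  simp only [christoffel, hsymm j i, add_comm (pd i _ x)]

lemma sum_mul_christoffel {q : Pt} (hg : IsUnit (g q).det) (k i j : Fin 2) :
    ∑ m, g q k m * christoffel g m i j q
      = (pd i (fun x => g x j k) q + pd j (fun x => g x i k) q
          - pd k (fun x => g x i j) q) / 2 := by
  set X : Fin 2 → ℝ := fun l =>
    pd i (fun x => g x j l) q + pd j (fun x => g x i l) q - pd l (fun x => g x i j) q
  have hlower : ∑ m, g q k m * christoffel g m i j q = (g q *ᵥ ((g q)⁻¹ *ᵥ X)) k / 2 := by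
    simp only [christoffel, mulVec, dotProduct, X, Finset.sum_div]
    exact Finset.sum_congr rfl fun _ _ => by ring
  rw [hlower, mulVec_mulVec, mul_nonsing_inv _ hg, one_mulVec]

end Christoffel

section Surface

variable {φ : Pt → Vec3} {q : Pt}

lemma contDiffAt_pdV_cross_pdV {n : WithTop ℕ∞} (hφ : ContDiffAt ℝ (n + 1) φ q) :
    ContDiffAt ℝ n (fun x => pdV 0 φ x ⨯₃ pdV 1 φ x) q :=
  contDiff_crossProduct.contDiffAt.comp q ((contDiffAt_pdV hφ 0).prodMk (contDiffAt_pdV hφ 1))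

lemma contDiffAt_unitNormal {n : WithTop ℕ∞} (hφ : ContDiffAt ℝ (n + 1) φ q)
    (hc : pdV 0 φ q ⨯₃ pdV 1 φ q ≠ 0) : ContDiffAt ℝ n (unitNormal φ) q := by
  have hN := contDiffAt_pdV_cross_pdV hφ
  have hsqrt := (Real.contDiffAt_sqrt (dotProduct_self_pos hc).ne').comp q
    (contDiff_dotProduct.contDiffAt.comp q (hN.prodMk hN))
  exact (hsqrt.inv (Real.sqrt_pos.2 (dotProduct_self_pos hc)).ne').smul hN

lemma unitNormal_dotProduct_pdV (φ : Pt → Vec3) (x : Pt) (j : Fin 2) :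
    unitNormal φ x ⬝ᵥ pdV j φ x = 0 := by
  simp only [unitNormal, dotProduct_comm _ (pdV j φ x), dotProduct_smul]
  fin_cases j <;> simp

lemma unitNormal_dotProduct_self (hc : pdV 0 φ q ⨯₃ pdV 1 φ q ≠ 0) :
    unitNormal φ q ⬝ᵥ unitNormal φ q = 1 := by
  have hpos := dotProduct_self_pos hc
  simp only [unitNormal, smul_dotProduct, dotProduct_smul, smul_eq_mul]
  rw [← mul_assoc, ← mul_inv, Real.mul_self_sqrt hpos.le, inv_mul_cancel₀ hpos.ne']

lemma eq_zero_of_orthogonal_frame {v : Vec3} (hc : pdV 0 φ q ⨯₃ pdV 1 φ q ≠ 0)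
    (htan : ∀ k, v ⬝ᵥ pdV k φ q = 0) (hnor : v ⬝ᵥ unitNormal φ q = 0) : v = 0 := by
  refine eq_zero_of_dotProduct_eq_zero_of_cross_ne_zero hc (htan 0) (htan 1) ?_
  simp only [unitNormal, dotProduct_smul, smul_eq_mul] at hnor
  exact (mul_eq_zero.1 hnor).resolve_left
    (inv_ne_zero (Real.sqrt_pos.2 (dotProduct_self_pos hc)).ne')

lemma indMetric_isSymm (φ : Pt → Vec3) (x : Pt) : (indMetric φ x).IsSymm :=
  IsSymm.ext fun _ _ => by simp only [indMetric, of_apply, dotProduct_comm]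

lemma det_indMetric (φ : Pt → Vec3) (x : Pt) :
    (indMetric φ x).det = pdV 0 φ x ⨯₃ pdV 1 φ x ⬝ᵥ pdV 0 φ x ⨯₃ pdV 1 φ x := by
  rw [cross_dot_cross, det_fin_two]
  rfl

lemma pd_indMetric (hφ : ContDiffAt ℝ 2 φ q) (a b c : Fin 2) :
    pd a (fun x => indMetric φ x b c) q
      = pdV a (pdV b φ) q ⬝ᵥ pdV c φ q + pdV b φ q ⬝ᵥ pdV a (pdV c φ) q :=
  pd_dotProduct (differentiableAt_pdV hφ b) (differentiableAt_pdV hφ c) a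

lemma pdV_dotProduct_pdV_pdV (hφ : ContDiffAt ℝ 2 φ q) (hc : pdV 0 φ q ⨯₃ pdV 1 φ q ≠ 0)
    (i j k : Fin 2) :
    pdV k φ q ⬝ᵥ pdV i (pdV j φ) q
      = ∑ m, indMetric φ q k m * christoffel (indMetric φ) m i j q := by
  have hdet : IsUnit (indMetric φ q).det := by
    rw [det_indMetric, isUnit_iff_ne_zero]
    exact (dotProduct_self_pos hc).ne'
  rw [sum_mul_christoffel hdet, pd_indMetric hφ, pd_indMetric hφ, pd_indMetric hφ,
    pdV_pdV_comm hφ j i, pdV_pdV_comm hφ k i, pdV_pdV_comm hφ k j,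
    dotProduct_comm (pdV j φ q) (pdV i (pdV k φ) q),
    dotProduct_comm (pdV k φ q) (pdV i (pdV j φ) q)]
  ring

theorem gauss_formula (hφ : ContDiffAt ℝ 2 φ q) (hc : pdV 0 φ q ⨯₃ pdV 1 φ q ≠ 0)
    (i j : Fin 2) :
    pdV i (pdV j φ) q
      = ∑ m, christoffel (indMetric φ) m i j q • pdV m φ q + sff φ q i j • unitNormal φ q := by
  rw [← sub_eq_zero]
  refine eq_zero_of_orthogonal_frame hc (fun k => ?_) ?_
  · simp only [sub_dotProduct, add_dotProduct, sum_dotProduct, smul_dotProduct, smul_eq_mul,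
      unitNormal_dotProduct_pdV, mul_zero, add_zero]
    rw [dotProduct_comm, pdV_dotProduct_pdV_pdV hφ hc, sub_eq_zero]
    exact Finset.sum_congr rfl fun m _ => by rw [mul_comm, (indMetric_isSymm φ q).apply]; rfl
  · simp only [sub_dotProduct, add_dotProduct, sum_dotProduct, smul_dotProduct, smul_eq_mul,
      dotProduct_comm (pdV _ φ q), unitNormal_dotProduct_pdV, unitNormal_dotProduct_self hc,
      mul_zero, Finset.sum_const_zero, mul_one, zero_add]
    exact sub_eq_zero.2 (dotProduct_comm _ _)

lemma pdV_unitNormal_dotProduct_pdV (hφ : ContDiffAt ℝ 2 φ q)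
    (hc : pdV 0 φ q ⨯₃ pdV 1 φ q ≠ 0) (i j : Fin 2) :
    pdV i (unitNormal φ) q ⬝ᵥ pdV j φ q = -sff φ q i j := by
  have h0 : pd i (fun x => unitNormal φ x ⬝ᵥ pdV j φ x) q = 0 := by
    simp [unitNormal_dotProduct_pdV, pd]
  rw [pd_dotProduct ((contDiffAt_unitNormal (n := 1) hφ hc).differentiableAt one_ne_zero)
    (differentiableAt_pdV hφ j)] at h0
  exact eq_neg_of_add_eq_zero_left h0

lemma unitNormal_dotProduct_pdV_unitNormal (hφ : ContDiffAt ℝ 2 φ q)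
    (hc : pdV 0 φ q ⨯₃ pdV 1 φ q ≠ 0) (i : Fin 2) :
    unitNormal φ q ⬝ᵥ pdV i (unitNormal φ) q = 0 := by
  have hunit : (fun x => unitNormal φ x ⬝ᵥ unitNormal φ x) =ᶠ[𝓝 q] fun _ => 1 := by
    filter_upwards [(contDiffAt_pdV_cross_pdV (n := 1) hφ).continuousAt.eventually_ne hc]
      with x hx using unitNormal_dotProduct_self hx
  have hn := (contDiffAt_unitNormal (n := 1) hφ hc).differentiableAt one_ne_zero
  have h0 : pd i (fun x => unitNormal φ x ⬝ᵥ unitNormal φ x) q = 0 := by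
    rw [hunit.pd_eq]
    simp [pd]
  rw [pd_dotProduct hn hn, dotProduct_comm (pdV i _ q)] at h0
  linarith

lemma pd_sff (hφ : ContDiffAt ℝ 3 φ q) (hc : pdV 0 φ q ⨯₃ pdV 1 φ q ≠ 0) (i j k : Fin 2) :
    pd i (fun x => sff φ x j k) q
      = unitNormal φ q ⬝ᵥ pdV i (pdV j (pdV k φ)) q
        - ∑ m, christoffel (indMetric φ) m j k q * sff φ q i m := by
  have hφ2 : ContDiffAt ℝ 2 φ q := hφ.of_le (by norm_num)
  have hE : DifferentiableAt ℝ (pdV j (pdV k φ)) q :=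
    differentiableAt_pdV (contDiffAt_pdV (n := 2) hφ k) j
  rw [show (fun x => sff φ x j k) = fun x => unitNormal φ x ⬝ᵥ pdV j (pdV k φ) x from rfl,
    pd_dotProduct ((contDiffAt_unitNormal (n := 1) hφ2 hc).differentiableAt one_ne_zero) hE,
    gauss_formula hφ2 hc j k]
  simp only [dotProduct_add, dotProduct_sum, dotProduct_smul, smul_eq_mul,
    pdV_unitNormal_dotProduct_pdV hφ2 hc, dotProduct_comm (pdV i (unitNormal φ) q) (unitNormal φ q),
    unitNormal_dotProduct_pdV_unitNormal hφ2 hc, Finset.sum_neg_distrib, mul_neg]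
  ring

end Surface

/-- **Codazzi equations.** For a smooth immersion `φ : U → ℝ³` with induced metric `g` and
second fundamental form `h`, the covariant derivative `∇h` is totally symmetric:
`∇ᵢ h_{jk} = ∇ⱼ h_{ik}` for all `i, j, k`. -/
theorem codazzi_equations
    (U : Set Pt) (hU : IsOpen U)
    (φ : Pt → Vec3) (hφ : IsImmersionOn φ U) :
    ∀ p ∈ U, ∀ i j k : Fin 2,
      covD (indMetric φ) (sff φ) i j k p - covD (indMetric φ) (sff φ) j i k p = 0 := by
  intro p hp i j k
  have hsmooth : ContDiffAt ℝ 3 φ p :=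
    (hφ.1.contDiffAt (hU.mem_nhds hp)).of_le (by norm_cast)
  have hc : pdV 0 φ p ⨯₃ pdV 1 φ p ≠ 0 := crossProduct_ne_zero_iff_linearIndependent.2 (hφ.2 p hp)
  have hthird : pdV i (pdV j (pdV k φ)) p = pdV j (pdV i (pdV k φ)) p :=
    pdV_pdV_comm (contDiffAt_pdV (n := 2) hsmooth k) i j
  have hΓ (l : Fin 2) : christoffel (indMetric φ) l j i p = christoffel (indMetric φ) l i j p :=
    congrFun (christoffel_comm (indMetric_isSymm φ) l j i) p
  simp only [covD, pd_sff hsmooth hc, hthird, hΓ, Fin.sum_univ_two]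
  ring
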